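/- Thuja chains exist: for all integers n ≥ 4 and 1 ≤ k ≤ n − 1, there exists a face chain F_1 ⊴ F_2 ⊴ … ⊴ F_k in the associahedron K(n), with each F_l having at least 2 internal vertices, such that dim F_l = ⌊(n − l)/2⌋ for every l = 1, …, k. -/
import Mathlib


/-- Plane binary trees: a single leaf, or `V₁ ∧ V₂` for plane binary trees `V₁, V₂`. -/
inductive PBT : Type
  | leaf : PBT
  | node : PBT → PBT → PBT

/-- Number of leaves of a plane binary tree. -/
def PBT.leaves : PBT → ℕ
  | .leaf => 1
  | .node a b => a.leaves + b.leaves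

/-- `1` if the root is an internal vertex, `0` if it is a leaf. -/
def PBT.isInternal : PBT → ℕ
  | .leaf => 0
  | .node _ _ => 1

/-- Number of left-leaning internal edges: edges joining an internal vertex to
its left child, that child being internal as well. -/
def PBT.leftE : PBT → ℕ
  | .leaf => 0
  | .node a b => a.leftE + b.leftE + a.isInternal

/-- Number of right-leaning internal edges: edges joining an internal vertex to
its right child, that child being internal as well. -/
def PBT.rightE : PBT → ℕ
  | .leaf => 0
  | .node a b => a.rightE + b.rightE + b.isInternal

/-- One right rotation applied to some subtree: somewhere a subtree
`(a ∧ b) ∧ c` is replaced by `a ∧ (b ∧ c)`. -/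
inductive RightRot : PBT → PBT → Prop
  | rot (a b c : PBT) : RightRot (.node (.node a b) c) (.node a (.node b c))
  | left {a a' : PBT} (b : PBT) : RightRot a a' → RightRot (.node a b) (.node a' b)
  | right (a : PBT) {b b' : PBT} : RightRot b b' → RightRot (.node a b) (.node a b')

/-- The Tamari order: reflexive-transitive closure of right rotation. -/
def Tamari : PBT → PBT → Prop := Relation.ReflTransGen RightRot

mutual
  /-- Schröder trees: plane rooted trees in which every internal vertex has at
  least two children (encoding faces of associahedra). -/
  inductive STree : Type
    | leaf : STree
    | node : SForest → STree
  /-- Lists of at least two Schröder trees (children of an internal vertex). -/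
  inductive SForest : Type
    | two : STree → STree → SForest
    | cons : STree → SForest → SForest
end

mutual
  /-- Number of leaves of a Schröder tree. -/
  def STree.leavesS : STree → ℕ
    | .leaf => 1
    | .node f => f.leavesF
  def SForest.leavesF : SForest → ℕ
    | .two a b => a.leavesS + b.leavesS
    | .cons a f => a.leavesS + f.leavesF
end

mutual
  /-- Number of internal vertices of a Schröder tree. -/
  def STree.vS : STree → ℕ
    | .leaf => 0
    | .node f => 1 + f.vF
  def SForest.vF : SForest → ℕ
    | .two a b => a.vS + b.vS
    | .cons a f => a.vS + f.vF
end

mutual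
  /-- `top t`: the binary tree obtained by recursively replacing each internal
  vertex with children `t₁, …, t_c` by the right comb `t₁ ∧ (t₂ ∧ (… ∧ t_c))`. -/
  def STree.top : STree → PBT
    | .leaf => .leaf
    | .node f => f.topF
  def SForest.topF : SForest → PBT
    | .two a b => .node a.top b.top
    | .cons a f => .node a.top f.topF
end

mutual
  /-- `bottom t`: the binary tree obtained by recursively replacing each internal
  vertex with children `t₁, …, t_c` by the left comb `((…(t₁ ∧ t₂)…) ∧ t_c)`. -/
  def STree.bottom : STree → PBT
    | .leaf => .leaf
    | .node f => f.bottomF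
  def SForest.bottomF : SForest → PBT
    | .two a b => .node a.bottom b.bottom
    | .cons a f => SForest.bottomAux a.bottom f
  def SForest.bottomAux : PBT → SForest → PBT
    | acc, .two a b => .node (.node acc a.bottom) b.bottom
    | acc, .cons a f => SForest.bottomAux (.node acc a.bottom) f
end

/-- The `m`-thuja. -/
def thuja : ℕ → STree
  | 0 => .leaf
  | 1 => .leaf
  | 2 => .node (.two .leaf .leaf)
  | 3 => .node (.cons .leaf (.two .leaf .leaf))
  | (m+4) => .node (.cons .leaf (.two (thuja (m+2)) .leaf))

/-- Graft a Schröder tree at the end of a right comb with `j` extra leaves. -/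
def graft : ℕ → STree → STree
  | 0, t => t
  | j+1, t => .node (.two .leaf (graft j t))

/-- Binary right comb with `j` extra leaves on top of `x`. -/
def combP : ℕ → PBT → PBT
  | 0, x => x
  | j+1, x => .node .leaf (combP j x)

theorem thuja_leaves : ∀ m, (thuja (m+2)).leavesS = m+2 := by
  have H : ∀ m, (thuja (m+2)).leavesS = m+2 ∧ (thuja (m+3)).leavesS = m+3 := by
    intro m
    induction m with
    | zero => exact ⟨rfl, rfl⟩
    | succ p ih =>
      refine ⟨ih.2, ?_⟩
      show (STree.node (.cons .leaf (.two (thuja (p+2)) .leaf))).leavesS = p+4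
      simp only [STree.leavesS, SForest.leavesF, ih.1]
      omega
  exact fun m => (H m).1

theorem thuja_v : ∀ m, (thuja (m+2)).vS = m/2 + 1 := by
  have H : ∀ m, (thuja (m+2)).vS = m/2 + 1 ∧ (thuja (m+3)).vS = (m+1)/2 + 1 := by
    intro m
    induction m with
    | zero => exact ⟨rfl, rfl⟩
    | succ p ih =>
      refine ⟨ih.2, ?_⟩
      show (STree.node (.cons .leaf (.two (thuja (p+2)) .leaf))).vS = (p+2)/2 + 1
      simp only [STree.vS, SForest.vF, ih.1]
      omega
  exact fun m => (H m).1

theorem thuja_top_bottom : ∀ m, (thuja (m+3)).top = PBT.node .leaf (thuja (m+2)).bottom := by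
  have H : ∀ m, (thuja (m+3)).top = PBT.node .leaf (thuja (m+2)).bottom ∧
      (thuja (m+4)).top = PBT.node .leaf (thuja (m+3)).bottom := by
    intro m
    induction m with
    | zero => exact ⟨rfl, rfl⟩
    | succ p ih =>
      refine ⟨ih.2, ?_⟩
      show (STree.node (.cons .leaf (.two (thuja (p+3)) .leaf))).top
          = PBT.node .leaf (STree.node (.cons .leaf (.two (thuja (p+2)) .leaf))).bottom
      simp only [STree.top, SForest.topF, STree.bottom, SForest.bottomF, SForest.bottomAux,
        ih.1]
  exact fun m => (H m).1

theorem graft_leaves : ∀ j t, (graft j t).leavesS = j + t.leavesS := by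
  intro j t
  induction j with
  | zero => simp [graft]
  | succ p ih =>
    show (STree.node (.two .leaf (graft p t))).leavesS = (p+1) + t.leavesS
    simp only [STree.leavesS, SForest.leavesF, ih]
    omega

theorem graft_v : ∀ j t, (graft j t).vS = j + t.vS := by
  intro j t
  induction j with
  | zero => simp [graft]
  | succ p ih =>
    show (STree.node (.two .leaf (graft p t))).vS = (p+1) + t.vS
    simp only [STree.vS, SForest.vF, ih]
    omega

theorem graft_top : ∀ j t, (graft j t).top = combP j t.top := by
  intro j t
  induction j with
  | zero => rfl
  | succ p ih =>
    show (STree.node (.two .leaf (graft p t))).top = combP (p+1) t.top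
    simp only [STree.top, SForest.topF, ih, combP]

theorem graft_bottom : ∀ j t, (graft j t).bottom = combP j t.bottom := by
  intro j t
  induction j with
  | zero => rfl
  | succ p ih =>
    show (STree.node (.two .leaf (graft p t))).bottom = combP (p+1) t.bottom
    simp only [STree.bottom, SForest.bottomF, ih, combP]

theorem combP_node : ∀ j x, combP j (PBT.node .leaf x) = combP (j+1) x := by
  intro j x
  induction j with
  | zero => rfl
  | succ p ih =>
    show PBT.node .leaf (combP p (PBT.node .leaf x)) = PBT.node .leaf (combP (p+1) x)
    rw [ih]

/-- Thuja chains exist: for all `n ≥ 4` and `1 ≤ k ≤ n − 1`, there exists a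
face chain `F_1 ⊴ F_2 ⊴ … ⊴ F_k` in the associahedron `K(n)` (faces being
Schröder trees with `n` leaves, `F ⊴ G` meaning `top F ≤ bottom G` in the
Tamari order), with each `F_l` a nontrivial face (at least `2` internal
vertices) of dimension `dim F_l = n − 1 − v(F_l) = ⌊(n − l)/2⌋`. -/
theorem thuja_chain_exists (n k : ℕ) (hn : 4 ≤ n) (hk1 : 1 ≤ k) (hk2 : k ≤ n - 1) :
    ∃ F : Fin k → STree,
      (∀ i, (F i).leavesS = n) ∧
      (∀ i, 2 ≤ (F i).vS) ∧
      (∀ i j : Fin k, (i : ℕ) + 1 = (j : ℕ) → Tamari (F i).top (F j).bottom) ∧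
      (∀ i : Fin k, n - 1 - (F i).vS = (n - ((i : ℕ) + 1)) / 2) := by
  refine ⟨fun i => graft i (thuja (n - i)), ?_, ?_, ?_, ?_⟩
  · intro i
    have hi : (i : ℕ) ≤ n - 2 := by have := i.2; omega
    obtain ⟨m, hm⟩ : ∃ m, n - (i : ℕ) = m + 2 := ⟨n - i - 2, by omega⟩
    dsimp only
    rw [hm, graft_leaves, thuja_leaves]
    omega
  · intro i
    have hi : (i : ℕ) ≤ n - 2 := by have := i.2; omega
    obtain ⟨m, hm⟩ : ∃ m, n - (i : ℕ) = m + 2 := ⟨n - i - 2, by omega⟩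
    dsimp only
    rw [hm, graft_v, thuja_v]
    omega
  · intro i j hij
    have hj : (j : ℕ) ≤ n - 2 := by have := j.2; omega
    obtain ⟨m, hm⟩ : ∃ m, n - (i : ℕ) = m + 3 := ⟨n - i - 3, by omega⟩
    have hm' : n - (j : ℕ) = m + 2 := by omega
    have key : (graft i (thuja (n - i))).top = (graft j (thuja (n - j))).bottom := by
      rw [hm, hm', graft_top, graft_bottom, thuja_top_bottom, combP_node, ← hij]
    dsimp only
    rw [key]
    exact Relation.ReflTransGen.refl
  · intro i
    have hi : (i : ℕ) ≤ n - 2 := by have := i.2; omega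
    obtain ⟨m, hm⟩ : ∃ m, n - (i : ℕ) = m + 2 := ⟨n - i - 2, by omega⟩
    dsimp only
    rw [hm, graft_v, thuja_v]
    omega
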